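/- arXiv:math/0606312 — 3 statements merged into one kernel-verified Lean document; each statement's English description precedes it below -/
import Mathlib

section
/- Let S be a Noetherian commutative ring, M a finitely generated S-module, and J an ideal of S. For an element f in S, the annihilator (0 :_M f) is contained in the J-torsion submodule H^0_J(M) = {m in M : J^n m = 0 for some n} if and only if f avoids every associated prime P of M with J not contained in P. -/
/-!
The annihilator `(0 :_M f)` is a finitely generated module whose associated primes are exactly the
associated primes of `M` containing `f`. A finitely generated module over a Noetherian ring is
`J`-power torsion iff `J` lies in the radical of its annihilator, and that radical is the
intersection of its associated primes, since the minimal primes of the annihilator are associated.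
-/

open Submodule

section

variable {R M : Type*} [CommRing R] [IsNoetherianRing R] [AddCommGroup M] [Module R M]

theorem radical_annihilator_eq_sInf_associatedPrimes [Module.Finite R M] :
    (Module.annihilator R M).radical = sInf (associatedPrimes R M) := by
  refine le_antisymm (le_sInf fun P hP => ?_) ?_
  · rw [hP.isPrime.radical_le_iff, ← annihilator_top]
    exact hP.annihilator_le
  · rw [← Ideal.sInf_minimalPrimes]
    exact sInf_le_sInf
      (Module.associatedPrimes.minimalPrimes_annihilator_subset_associatedPrimes R M)

theorem forall_associatedPrimes_le_iff_forall_exists_pow_smul_eq_zero [Module.Finite R M]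
    (J : Ideal R) :
    (∀ P ∈ associatedPrimes R M, J ≤ P) ↔ ∀ x : M, ∃ n : ℕ, ∀ r ∈ J ^ n, r • x = 0 := by
  constructor
  · intro hJ x
    have hJ : J ≤ (Module.annihilator R M).radical := by
      rw [radical_annihilator_eq_sInf_associatedPrimes]
      exact le_sInf hJ
    obtain ⟨n, hn⟩ := Ideal.exists_pow_le_of_le_radical_of_fg hJ (IsNoetherian.noetherian J)
    exact ⟨n, fun r hr => Module.mem_annihilator.mp (hn hr) x⟩
  · intro hx P hP
    obtain ⟨hP, x, rfl⟩ := isAssociatedPrime_iff.mp hP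
    obtain ⟨n, hn⟩ := hx x
    exact Ideal.IsPrime.le_of_pow_le (hP := hP) fun r hr => by
      simpa [mem_colon_singleton] using hn r hr

theorem mem_associatedPrimes_ker_lsmul_iff {f : R} {P : Ideal R} :
    P ∈ associatedPrimes R (LinearMap.ker (LinearMap.lsmul R M f)) ↔
      P ∈ associatedPrimes R M ∧ f ∈ P := by
  constructor
  · intro hP
    refine ⟨associatedPrimes.subset_of_injective (Submodule.injective_subtype _) hP, ?_⟩
    obtain ⟨-, ⟨x, hx⟩, rfl⟩ := isAssociatedPrime_iff.mp hP
    simpa [mem_colon_singleton, Subtype.ext_iff] using hx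
  · rintro ⟨hP, hf⟩
    obtain ⟨hP, x, rfl⟩ := isAssociatedPrime_iff.mp hP
    have hx : x ∈ LinearMap.ker (LinearMap.lsmul R M f) := by
      simpa [mem_colon_singleton] using hf
    refine isAssociatedPrime_iff.mpr ⟨hP, ⟨x, hx⟩, ?_⟩
    ext r
    simp [mem_colon_singleton, Subtype.ext_iff]

end

/-- Let `S` be a Noetherian commutative ring, `M` a finitely generated
`S`-module, and `J` an ideal of `S`.  For an element `f` of `S`, the annihilator
`(0 :_M f)` is contained in the `J`-torsion submodule
`H^0_J(M) = {m : M | ∃ n, J^n • m = 0}` if and only if `f` avoids every associated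
prime `P` of `M` with `J ⊄ P`. -/
theorem colon_subset_torsion_iff_avoids_assPrimes
    (S : Type*) [CommRing S] [IsNoetherianRing S]
    (M : Type*) [AddCommGroup M] [Module S M] [Module.Finite S M]
    (J : Ideal S) (f : S) :
    (∀ m : M, f • m = 0 → ∃ n : ℕ, ∀ r ∈ J ^ n, r • m = 0) ↔
      (∀ P ∈ associatedPrimes S M, ¬ J ≤ P → f ∉ P) := by
  calc (∀ m : M, f • m = 0 → ∃ n : ℕ, ∀ r ∈ J ^ n, r • m = 0)
      ↔ ∀ x : LinearMap.ker (LinearMap.lsmul S M f), ∃ n : ℕ, ∀ r ∈ J ^ n, r • x = 0 := by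
        simp [Subtype.ext_iff]
    _ ↔ ∀ P ∈ associatedPrimes S (LinearMap.ker (LinearMap.lsmul S M f)), J ≤ P :=
        (forall_associatedPrimes_le_iff_forall_exists_pow_smul_eq_zero J).symm
    _ ↔ ∀ P ∈ associatedPrimes S M, ¬ J ≤ P → f ∉ P := by
        simp only [mem_associatedPrimes_ker_lsmul_iff]
        grind
end

section
/- Let S be a standard N^k-graded polynomial ring over a field k, M a finitely generated Z^k-graded S-module with beg^{(l)}(M) = min{n_l : M_n ≠ 0}, and I a multigraded homogeneous ideal. Define ρ^{(l)}_M(I) as the minimum over all M-reductions J of I of the maximal l-th coordinate of a minimal generating degree of J. Then for every n ≥ 0, the maximal l-th coordinate d^{(l)}(I^n M) among minimal generating degrees of I^n M satisfies d^{(l)}(I^n M) ≥ n·ρ^{(l)}_M(I) + beg^{(l)}(M). -/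
open MvPolynomial

/-! Setup: `S = 𝕜[x_{l,j} : l < k, j < N l]` is the standard `ℕ^k`-graded polynomial
ring, realized as `MvPolynomial (Σ l : Fin k, Fin (N l)) 𝕜` graded by the weight
`wt ⟨l,j⟩ = e_l ∈ ℤ^k`.  A finitely generated `ℤ^k`-graded `S`-module is a module
`M` with a decomposition `ℳ : (Fin k → ℤ) → Submodule 𝕜 M` compatible with the
grading of `S`. -/

/-- The weight of the variable `x_{l,j}` is the `l`-th standard unit vector. -/
noncomputable def wt (k : ℕ) (N : Fin k → ℕ) : (Σ l : Fin k, Fin (N l)) → (Fin k → ℤ) :=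
  fun i => Pi.single i.1 1

/-- `aInvE l P` is `max { n l | P n }` as an extended real number (`⊥ = -∞` when no
degree satisfies `P`, `⊤ = +∞` when the set of such coordinates is unbounded). -/
noncomputable def aInvE {k : ℕ} (l : Fin k) (P : (Fin k → ℤ) → Prop) : EReal :=
  sSup {x : EReal | ∃ n : Fin k → ℤ, P n ∧ x = ((n l : ℝ) : EReal)}

/-- Casting `ℤ → EReal`. -/
noncomputable def zE (d : ℤ) : EReal := ((d : ℝ) : EReal)

section

variable (k : ℕ) (N : Fin k → ℕ) (𝕜 : Type*) [Field 𝕜]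

/-- The ideal generated by all the variables. -/
noncomputable def mIdeal : Ideal (MvPolynomial (Σ l : Fin k, Fin (N l)) 𝕜) :=
  Ideal.span (Set.range X)

/-- An ideal is (multigraded) homogeneous if it contains all the weighted homogeneous
components of its elements. -/
def IsHomog (J : Ideal (MvPolynomial (Σ l : Fin k, Fin (N l)) 𝕜)) : Prop :=
  ∀ f ∈ J, ∀ n : Fin k → ℤ, weightedHomogeneousComponent (wt k N) n f ∈ J

/-- `d^{(l)}(J)` for a homogeneous ideal `J`: the supremum (in `EReal`) of the `l`-th
coordinates of the minimal generating degrees of `J`, i.e. of the degrees `n` with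
`(J/𝔪J)_n ≠ 0`. -/
noncomputable def dlIdeal (l : Fin k)
    (J : Ideal (MvPolynomial (Σ l : Fin k, Fin (N l)) 𝕜)) : EReal :=
  sSup {x : EReal | ∃ n : Fin k → ℤ, (∃ f ∈ J,
    f ∈ weightedHomogeneousSubmodule 𝕜 (wt k N) n ∧ f ∉ mIdeal k N 𝕜 * J) ∧
    x = zE (n l)}

variable (M : Type*) [AddCommGroup M] [Module 𝕜 M]
    [Module (MvPolynomial (Σ l : Fin k, Fin (N l)) 𝕜) M]

/-- `d^{(l)}` of a (graded) submodule `P ⊆ M`: the supremum of the `l`-th coordinates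
of degrees `n` with `(P/𝔪P)_n ≠ 0`. -/
noncomputable def dlSubmodule (ℳ : (Fin k → ℤ) → Submodule 𝕜 M) (l : Fin k)
    (P : Submodule (MvPolynomial (Σ l : Fin k, Fin (N l)) 𝕜) M) : EReal :=
  sSup {x : EReal | ∃ n : Fin k → ℤ,
    (∃ m ∈ ℳ n, m ∈ P ∧ m ∉ (mIdeal k N 𝕜 • P :
        Submodule (MvPolynomial (Σ l : Fin k, Fin (N l)) 𝕜) M)) ∧
    x = zE (n l)}

/-- `J` is an `M`-reduction of `I`: `J ⊆ I` homogeneous with `IⁿM = J I^{n-1} M` for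
all `n ≫ 0`. -/
def IsMReduction (I J : Ideal (MvPolynomial (Σ l : Fin k, Fin (N l)) 𝕜)) : Prop :=
  J ≤ I ∧ IsHomog k N 𝕜 J ∧ ∃ n₀ : ℕ, ∀ n ≥ n₀,
    (I ^ (n + 1) • ⊤ : Submodule (MvPolynomial (Σ l : Fin k, Fin (N l)) 𝕜) M) =
      J • (I ^ n • ⊤ : Submodule (MvPolynomial (Σ l : Fin k, Fin (N l)) 𝕜) M)

end

/-!
For `n ≥ 1` and an integer `c` with `d^{(l)}(IⁿM) < n(c+1) + beg^{(l)}(M)`, split `I = J + J'`,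
where `J` (resp. `J'`) is generated by the homogeneous elements of `I` of `l`-th degree `≤ c`
(resp. `> c`). Then `Iⁿ ⊆ J Iⁿ⁻¹ + J'ⁿ`, and `J'ⁿM` lives in `l`-th degrees
`≥ n(c+1) + beg^{(l)}(M)`, above all minimal generators of `IⁿM`, so `J'ⁿM ⊆ 𝔪IⁿM`. Graded
Nakayama gives `IⁿM = J Iⁿ⁻¹M`: `J` is an `M`-reduction with `d^{(l)}(J) ≤ c`, hence `ρ ≤ c`.
Since this holds for every such `c`, `nρ + beg^{(l)}(M) ≤ d^{(l)}(IⁿM)`. For `n = 0`, Nakayama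
shows that `M ≠ 0` has a minimal generator, of `l`-th degree `≥ beg^{(l)}(M)`.
-/

open DirectSum

section HomogeneousSubmodule

variable {ι A M : Type*} [DecidableEq ι] [Semiring A] [AddCommMonoid M] [Module A M]
  {σ : Type*} [SetLike σ M] [AddSubmonoidClass σ M] (ℳ : ι → σ) [Decomposition ℳ]

theorem mem_of_forall_decompose_mem {P : Type*} [SetLike P M] [AddSubmonoidClass P M] {p : P}
    {x : M} (h : ∀ n, (decompose ℳ x n : M) ∈ p) : x ∈ p := by
  classical
  rw [← sum_support_decompose ℳ x]
  exact sum_mem fun n _ => h n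

theorem Submodule.IsHomogeneous.top : (⊤ : Submodule A M).IsHomogeneous ℳ :=
  fun _ _ _ => Submodule.mem_top

theorem Submodule.IsHomogeneous.bot : (⊥ : Submodule A M).IsHomogeneous ℳ := fun _ _ hx => by
  rw [(Submodule.mem_bot _).mp hx, decompose_zero]
  exact zero_mem _

end HomogeneousSubmodule

section GradedModule

variable {ι R A M : Type*} [AddCommGroup ι] [DecidableEq ι]
  [CommSemiring R] [CommRing A] [Algebra R A] [AddCommGroup M] [Module R M] [Module A M]
  {𝒜 : ι → Submodule R A} {ℳ : ι → Submodule R M} [Decomposition ℳ] [SetLike.GradedSMul 𝒜 ℳ]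

theorem coe_decompose_smul_of_mem {a : A} {e : ι} (ha : a ∈ 𝒜 e) (m : M) (n : ι) :
    (decompose ℳ (a • m) n : M) = a • (decompose ℳ m (n - e) : M) := by
  induction m using Decomposition.inductionOn ℳ with
  | zero => simp
  | @homogeneous μ m =>
    have ham : a • (m : M) ∈ ℳ (e + μ) := SetLike.GradedSMul.smul_mem ha m.2
    by_cases hn : e + μ = n
    · rw [decompose_of_mem_same ℳ (hn ▸ ham), ← hn, add_sub_cancel_left,
        decompose_of_mem_same ℳ m.2]
    · rw [decompose_of_mem_ne ℳ ham hn, decompose_of_mem_ne ℳ m.2 (by rintro rfl; simp at hn),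
        smul_zero]
  | add m m' hm hm' => simp [smul_add, hm, hm']

variable [GradedAlgebra 𝒜]

variable (𝒜) in
open Classical in
theorem coe_decompose_smul (a : A) (m : M) (n : ι) :
    (decompose ℳ (a • m) n : M) =
      ∑ e ∈ (decompose 𝒜 a).support, (decompose 𝒜 a e : A) • (decompose ℳ m (n - e) : M) := by
  conv_lhs => rw [← sum_support_decompose 𝒜 a, Finset.sum_smul, decompose_sum]
  rw [DirectSum.sum_apply, Submodule.coe_sum]
  exact Finset.sum_congr rfl fun e _ => coe_decompose_smul_of_mem (ℳ := ℳ) (decompose 𝒜 a e).2 m n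

theorem Submodule.IsHomogeneous.smul {I : Ideal A} (hI : I.IsHomogeneous 𝒜)
    {P : Submodule A M} (hP : P.IsHomogeneous ℳ) : (I • P).IsHomogeneous ℳ := by
  intro n x hx
  refine Submodule.smul_induction_on hx (fun a ha p hp => ?_) fun x y hx hy => ?_
  · rw [coe_decompose_smul 𝒜]
    exact Submodule.sum_mem _ fun e _ => Submodule.smul_mem_smul (hI e ha) (hP _ hp)
  · simpa using add_mem hx hy

theorem Ideal.IsHomogeneous.pow {I : Ideal A} (hI : I.IsHomogeneous 𝒜) (n : ℕ) :
    (I ^ n).IsHomogeneous 𝒜 := by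
  induction n with
  | zero => simpa using Ideal.IsHomogeneous.top 𝒜
  | succ n ih => simpa [pow_succ] using ih.mul hI

variable (ℳ) in
def degGE (φ : ι →+ ℤ) (β : ℤ) : Set M :=
  {m | ∀ n, (decompose ℳ m n : M) ≠ 0 → β ≤ φ n}

variable {φ : ι →+ ℤ}

theorem zero_mem_degGE (β : ℤ) : (0 : M) ∈ degGE ℳ φ β := by
  simp [degGE]

theorem add_mem_degGE {β : ℤ} {x y : M} (hx : x ∈ degGE ℳ φ β) (hy : y ∈ degGE ℳ φ β) :
    x + y ∈ degGE ℳ φ β := by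
  intro n hn
  by_cases h : (decompose ℳ x n : M) = 0
  · exact hy n (by simpa [h] using hn)
  · exact hx n h

theorem degGE_anti {β β' : ℤ} (h : β' ≤ β) : degGE ℳ φ β ⊆ degGE ℳ φ β' :=
  fun _ hm n hn => h.trans (hm n hn)

theorem mem_degGE_of_mem {m : M} {e : ι} (hm : m ∈ ℳ e) : m ∈ degGE ℳ φ (φ e) := by
  intro n hn
  obtain rfl : e = n := by_contra fun he => hn (decompose_of_mem_ne ℳ hm he)
  exact le_rfl

theorem exists_mem_degGE (m : M) : ∃ β, m ∈ degGE ℳ φ β := by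
  classical
  obtain ⟨β, hβ⟩ := ((decompose ℳ m).support.image φ).bddBelow
  exact ⟨β, fun n hn => hβ (Finset.mem_image_of_mem φ (by simpa using hn))⟩

theorem smul_mem_degGE {γ β : ℤ} {a : A} {m : M} (ha : a ∈ degGE 𝒜 φ γ)
    (hm : m ∈ degGE ℳ φ β) : a • m ∈ degGE ℳ φ (γ + β) := by
  intro n hn
  rw [coe_decompose_smul 𝒜] at hn
  obtain ⟨e, -, he⟩ := Finset.exists_ne_zero_of_sum_ne_zero hn
  have hγ := ha e (left_ne_zero_of_smul he)
  have hβ := hm (n - e) (right_ne_zero_of_smul he)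
  rw [map_sub] at hβ
  omega

theorem smul_subset_degGE {γ β : ℤ} {I : Ideal A} {P : Submodule A M}
    (hI : ∀ a ∈ I, a ∈ degGE 𝒜 φ γ) (hP : ∀ m ∈ P, m ∈ degGE ℳ φ β) :
    ∀ x ∈ I • P, x ∈ degGE ℳ φ (γ + β) := by
  intro x hx
  exact Submodule.smul_induction_on hx (fun a ha p hp => smul_mem_degGE (hI a ha) (hP p hp))
    fun x y hx hy => add_mem_degGE hx hy

theorem pow_smul_top_subset_degGE {γ β : ℤ} {I : Ideal A} (hI : ∀ a ∈ I, a ∈ degGE 𝒜 φ γ)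
    (hM : ∀ m : M, m ∈ degGE ℳ φ β) (j : ℕ) :
    ∀ x ∈ I ^ j • (⊤ : Submodule A M), x ∈ degGE ℳ φ (j * γ + β) := by
  induction j with
  | zero => intro x _; simpa using hM x
  | succ j ih =>
    rw [pow_succ', Submodule.mul_smul,
      show ((j + 1 : ℕ) : ℤ) * γ + β = γ + (j * γ + β) by push_cast; ring]
    exact smul_subset_degGE hI ih

theorem Ideal.span_subset_degGE {γ : ℤ} (h𝒜 : ∀ a : A, a ∈ degGE 𝒜 φ 0) {G : Set A}
    (hG : ∀ g ∈ G, g ∈ degGE 𝒜 φ γ) : ∀ a ∈ Ideal.span G, a ∈ degGE 𝒜 φ γ := by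
  intro a ha
  induction ha using Submodule.span_induction with
  | mem g hg => exact hG g hg
  | zero => exact zero_mem_degGE γ
  | add x y _ _ hx hy => exact add_mem_degGE hx hy
  | smul r x _ hx => simpa using smul_mem_degGE (𝒜 := 𝒜) (ℳ := 𝒜) (h𝒜 r) hx

theorem exists_forall_mem_degGE [Module.Finite A M] (h𝒜 : ∀ a : A, a ∈ degGE 𝒜 φ 0) :
    ∃ B, ∀ m : M, m ∈ degGE ℳ φ B := by
  obtain ⟨s, hs⟩ := Module.Finite.fg_top (R := A) (M := M)
  choose β hβ using fun m : M => exists_mem_degGE (ℳ := ℳ) (φ := φ) m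
  obtain ⟨B, hB⟩ := (s.image β).bddBelow
  refine ⟨B, fun m => ?_⟩
  have hm : m ∈ Submodule.span A (s : Set M) := hs ▸ Submodule.mem_top
  induction hm using Submodule.span_induction with
  | mem x hx => exact degGE_anti (hB (Finset.mem_image_of_mem β hx)) (hβ x)
  | zero => exact zero_mem_degGE B
  | add x y _ _ hx hy => exact add_mem_degGE hx hy
  | smul a x _ hx => simpa using smul_mem_degGE (h𝒜 a) hx

variable {τ : ι →+ ℤ} {𝔪 : Ideal A} {P Q : Submodule A M}

theorem coe_decompose_mem_of_mem_smul (h𝔪 : ∀ a ∈ 𝔪, a ∈ degGE 𝒜 τ 1) {β : ℤ}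
    (hPQ : ∀ p ∈ P, ∀ n, τ n < β → (decompose ℳ p n : M) ∈ Q) :
    ∀ x ∈ 𝔪 • P, ∀ n, τ n < β + 1 → (decompose ℳ x n : M) ∈ Q := by
  intro x hx n hn
  refine Submodule.smul_induction_on hx (fun a ha p hp => ?_) fun x y hx hy => ?_
  · rw [coe_decompose_smul 𝒜]
    refine Q.sum_mem fun e _ => ?_
    by_cases he : (decompose 𝒜 a e : A) = 0
    · simp [he]
    · have := h𝔪 a ha e he
      exact Q.smul_mem _ (hPQ p hp _ (by rw [map_sub]; omega))
  · simpa using Q.add_mem hx hy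

/-- Graded Nakayama, by induction on the `τ`-degree, which is bounded below on `M` and raised by
every element of `𝔪`. -/
theorem Submodule.le_of_le_sup_smul_of_degGE (h𝔪 : ∀ a ∈ 𝔪, a ∈ degGE 𝒜 τ 1) {B : ℤ}
    (hM : ∀ m : M, m ∈ degGE ℳ τ B) (hQ : Q.IsHomogeneous ℳ) (h : P ≤ Q ⊔ 𝔪 • P) : P ≤ Q := by
  have below : ∀ t : ℕ, ∀ p ∈ P, ∀ n, τ n < B + t → (decompose ℳ p n : M) ∈ Q := by
    intro t
    induction t with
    | zero =>
      intro p _ n hn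
      by_contra hp
      have := hM p n (fun h0 => hp (h0 ▸ Q.zero_mem))
      omega
    | succ t ih =>
      intro p hp n hn
      obtain ⟨q, hq, r, hr, rfl⟩ := Submodule.mem_sup.mp (h hp)
      rw [decompose_add, DirectSum.add_apply, Submodule.coe_add]
      exact Q.add_mem (hQ n hq)
        (coe_decompose_mem_of_mem_smul h𝔪 ih r hr n (by push_cast at hn; omega))
  exact fun p hp => mem_of_forall_decompose_mem ℳ fun n =>
    below (τ n - B + 1).toNat p hp n (by omega)

end GradedModule

section Ideal

variable {R : Type*} [CommSemiring R]

theorem Ideal.sup_pow_succ_le (I J : Ideal R) (n : ℕ) :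
    (I ⊔ J) ^ (n + 1) ≤ I * (I ⊔ J) ^ n ⊔ J ^ (n + 1) := by
  induction n with
  | zero => simp
  | succ n ih =>
    calc (I ⊔ J) ^ (n + 2) = I * (I ⊔ J) ^ (n + 1) ⊔ J * (I ⊔ J) ^ (n + 1) := by
          rw [pow_succ' _ (n + 1), Submodule.sup_mul]
      _ ≤ I * (I ⊔ J) ^ (n + 1) ⊔ J * (I * (I ⊔ J) ^ n ⊔ J ^ (n + 1)) :=
          sup_le_sup_left (Ideal.mul_mono_right ih) _
      _ = I * (I ⊔ J) ^ (n + 1) ⊔ I * (J * (I ⊔ J) ^ n) ⊔ J ^ (n + 2) := by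
          rw [Submodule.mul_sup, mul_left_comm, ← pow_succ', sup_assoc]
      _ ≤ I * (I ⊔ J) ^ (n + 1) ⊔ J ^ (n + 2) := by
          refine sup_le_sup_right (sup_le le_rfl (Ideal.mul_mono_right ?_)) _
          rw [pow_succ']
          exact Ideal.mul_mono_left le_sup_right

theorem Ideal.pow_succ_smul_eq_of_le {M : Type*} [AddCommMonoid M] [Module R M]
    {I J : Ideal R} {P : Submodule R M} {n m : ℕ} (h : I ^ (n + 1) • P = J • I ^ n • P)
    (hnm : n ≤ m) : I ^ (m + 1) • P = J • I ^ m • P := by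
  obtain ⟨j, rfl⟩ := Nat.exists_eq_add_of_le hnm
  rw [show n + j + 1 = j + (n + 1) by omega, pow_add, Submodule.mul_smul, h,
    ← Submodule.mul_smul, mul_comm, Submodule.mul_smul, ← Submodule.mul_smul (I ^ j),
    ← pow_add, add_comm]

end Ideal

section HomogeneousSpan

variable {ι R A : Type*} [CommSemiring R] [CommRing A] [Algebra R A] (𝒜 : ι → Submodule R A)

def Ideal.spanHomogeneousIn (I : Ideal A) (D : Set ι) : Ideal A :=
  Ideal.span {a | a ∈ I ∧ ∃ e ∈ D, a ∈ 𝒜 e}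

variable {𝒜} {I : Ideal A} {D : Set ι}

theorem Ideal.spanHomogeneousIn_le : I.spanHomogeneousIn 𝒜 D ≤ I :=
  Ideal.span_le.mpr fun _ ha => ha.1

variable [AddCommGroup ι] [DecidableEq ι] [GradedAlgebra 𝒜]

theorem Ideal.isHomogeneous_spanHomogeneousIn : (I.spanHomogeneousIn 𝒜 D).IsHomogeneous 𝒜 :=
  Ideal.homogeneous_span 𝒜 _ fun _ ⟨_, e, _, ha⟩ => ⟨e, ha⟩

theorem Ideal.spanHomogeneousIn_sup_compl (hI : I.IsHomogeneous 𝒜) :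
    I.spanHomogeneousIn 𝒜 D ⊔ I.spanHomogeneousIn 𝒜 Dᶜ = I := by
  refine le_antisymm (sup_le spanHomogeneousIn_le spanHomogeneousIn_le) fun a ha =>
    mem_of_forall_decompose_mem 𝒜 fun e => ?_
  have hmem e : (decompose 𝒜 a e : A) ∈ 𝒜 e := SetLike.coe_mem _
  by_cases he : e ∈ D
  · exact Submodule.mem_sup_left (Ideal.subset_span ⟨hI e ha, e, he, hmem e⟩)
  · exact Submodule.mem_sup_right (Ideal.subset_span ⟨hI e ha, e, he, hmem e⟩)

theorem Ideal.spanHomogeneousIn_subset_degGE {φ : ι →+ ℤ} (h𝒜 : ∀ a : A, a ∈ degGE 𝒜 φ 0)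
    {γ : ℤ} (hD : ∀ e ∈ D, γ ≤ φ e) : ∀ a ∈ I.spanHomogeneousIn 𝒜 D, a ∈ degGE 𝒜 φ γ :=
  Ideal.span_subset_degGE h𝒜 fun _ ⟨_, e, he, ha⟩ => degGE_anti (hD e he) (mem_degGE_of_mem ha)

/-- An ideal generated by homogeneous elements of degrees in `D` has its minimal generators in
degrees in `D`. -/
theorem Ideal.coe_decompose_mem_mul_spanHomogeneousIn {𝔪 : Ideal A}
    (h𝔪 : ∀ e ≠ 0, ∀ a ∈ 𝒜 e, a ∈ 𝔪) {x : A} (hx : x ∈ I.spanHomogeneousIn 𝒜 D) {ν : ι}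
    (hν : ν ∉ D) : (decompose 𝒜 x ν : A) ∈ 𝔪 * I.spanHomogeneousIn 𝒜 D := by
  induction hx using Submodule.span_induction generalizing ν with
  | mem g hg =>
    obtain ⟨-, e, he, hg⟩ := hg
    rw [decompose_of_mem_ne 𝒜 hg (by rintro rfl; exact hν he)]
    exact zero_mem _
  | zero => simp
  | add x y _ _ hx hy => simpa using add_mem (hx hν) (hy hν)
  | smul a x hx ih =>
    rw [coe_decompose_smul 𝒜 (ℳ := 𝒜)]
    refine Submodule.sum_mem _ fun e _ => ?_
    by_cases he : e = 0
    · subst he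
      rw [sub_zero]
      exact Ideal.mul_mem_left _ _ (ih hν)
    · exact Ideal.mul_mem_mul (h𝔪 e he _ (SetLike.coe_mem _))
        (Ideal.isHomogeneous_spanHomogeneousIn (ν - e) hx)

end HomogeneousSpan

section WeightedGrading

open MvPolynomial

attribute [local instance] MvPolynomial.weightedGradedAlgebra

variable {σ ι R : Type*} [CommRing R] [AddCommGroup ι] {w : σ → ι}

theorem MvPolynomial.mem_span_range_X_of_mem_weightedHomogeneousSubmodule {e : ι} (he : e ≠ 0)
    {a : MvPolynomial σ R} (ha : a ∈ weightedHomogeneousSubmodule R w e) :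
    a ∈ Ideal.span (Set.range X) := by
  rw [← Set.image_univ, mem_ideal_span_X_image]
  intro d hd
  have hd0 : d ≠ 0 := by
    rintro rfl
    exact he ((ha (mem_support_iff.mp hd)).symm.trans (map_zero _))
  obtain ⟨i, hi⟩ := Finsupp.ne_iff.mp hd0
  exact ⟨i, Set.mem_univ i, hi⟩

theorem MvPolynomial.nonneg_of_mem_weightedHomogeneousSubmodule {φ : ι →+ ℤ}
    (hφ : ∀ i, 0 ≤ φ (w i)) {e : ι} {a : MvPolynomial σ R}
    (ha : a ∈ weightedHomogeneousSubmodule R w e) (h0 : a ≠ 0) : 0 ≤ φ e := by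
  obtain ⟨d, hd⟩ := ne_zero_iff.mp h0
  rw [← ha hd, Finsupp.weight_apply, map_finsuppSum]
  exact Finsupp.sum_nonneg fun i _ => by rw [map_nsmul]; exact nsmul_nonneg (hφ i) _

variable [DecidableEq ι] {φ : ι →+ ℤ}

theorem MvPolynomial.mem_degGE_zero (hφ : ∀ i, 0 ≤ φ (w i)) (a : MvPolynomial σ R) :
    a ∈ degGE (weightedHomogeneousSubmodule R w) φ 0 :=
  fun n hn => nonneg_of_mem_weightedHomogeneousSubmodule hφ
    (DirectSum.decompose (weightedHomogeneousSubmodule R w) a n).2 hn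

theorem MvPolynomial.span_range_X_subset_degGE (hφ : ∀ i, 1 ≤ φ (w i)) :
    ∀ a ∈ Ideal.span (Set.range (X : σ → MvPolynomial σ R)),
      a ∈ degGE (weightedHomogeneousSubmodule R w) φ 1 := by
  have h0 := mem_degGE_zero (R := R) (fun i => zero_le_one.trans (hφ i))
  refine Ideal.span_subset_degGE (𝒜 := weightedHomogeneousSubmodule R w) h0 ?_
  rintro _ ⟨i, rfl⟩
  have hX : (X i : MvPolynomial σ R) ∈ weightedHomogeneousSubmodule R w (w i) :=
    isWeightedHomogeneous_X R w i
  exact degGE_anti (hφ i) (mem_degGE_of_mem hX)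

end WeightedGrading

theorem zE_le_zE {a b : ℤ} (h : a ≤ b) : zE a ≤ zE b :=
  EReal.coe_le_coe_iff.mpr (Int.cast_le.mpr h)

theorem zE_mul_add_le_of_forall {n : ℕ} (hn : 0 < n) {ρ D : EReal} {b : ℤ}
    (h : ∀ c : ℤ, zE c < ρ → zE (n * (c + 1) + b) ≤ D) : zE n * ρ + zE b ≤ D := by
  have hn' : (1 : ℝ) ≤ n := by exact_mod_cast hn
  induction ρ using EReal.rec with
  | bot =>
    rw [zE, EReal.coe_mul_bot_of_pos (by positivity), EReal.bot_add]
    exact bot_le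
  | top =>
    suffices D = ⊤ by rw [this]; exact le_top
    refine (EReal.eq_top_iff_forall_lt D).mpr fun y => ?_
    set c : ℤ := max 0 ⌈y - b⌉
    refine lt_of_lt_of_le ?_ (h c (EReal.coe_lt_top _))
    have h1 : y - b ≤ c := (Int.le_ceil _).trans (by exact_mod_cast le_max_right _ _)
    have h2 : (0 : ℝ) ≤ c := by exact_mod_cast le_max_left _ _
    rw [zE, EReal.coe_lt_coe_iff]
    push_cast
    nlinarith
  | coe y =>
    refine le_trans ?_ (h (⌈y⌉ - 1) ?_)
    · rw [zE, zE, zE, ← EReal.coe_mul, ← EReal.coe_add, EReal.coe_le_coe_iff]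
      push_cast
      nlinarith [Int.le_ceil y]
    · rw [zE, EReal.coe_lt_coe_iff]
      push_cast
      linarith [Int.ceil_lt_add_one y]

section Multigraded

attribute [local instance] MvPolynomial.weightedGradedAlgebra

abbrev PolyRing (k : ℕ) (N : Fin k → ℕ) (𝕜 : Type*) [Field 𝕜] : Type _ :=
  MvPolynomial (Σ l : Fin k, Fin (N l)) 𝕜

noncomputable abbrev polyGrading (k : ℕ) (N : Fin k → ℕ) (𝕜 : Type*) [Field 𝕜] :
    (Fin k → ℤ) → Submodule 𝕜 (PolyRing k N 𝕜) :=
  weightedHomogeneousSubmodule 𝕜 (wt k N)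

variable {k : ℕ} {N : Fin k → ℕ} {𝕜 : Type*} [Field 𝕜]

theorem isHomog_iff_isHomogeneous {J : Ideal (PolyRing k N 𝕜)} :
    IsHomog k N 𝕜 J ↔ J.IsHomogeneous (polyGrading k N 𝕜) := by
  refine ⟨fun h n f hf => ?_, fun h f hf n => weightedHomogeneousComponent_mem_of_mem _ _ h hf n⟩
  have := h f hf n
  rwa [← weightedDecomposition.decompose'_apply] at this

variable (k) in
def sumCoords : (Fin k → ℤ) →+ ℤ := ∑ l, Pi.evalAddMonoidHom (fun _ => ℤ) l

theorem sumCoords_wt (i : Σ l : Fin k, Fin (N l)) : sumCoords k (wt k N i) = 1 := by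
  simp [sumCoords, wt]

theorem evalAddMonoidHom_wt_nonneg (l : Fin k) (i : Σ l : Fin k, Fin (N l)) :
    0 ≤ Pi.evalAddMonoidHom (fun _ => ℤ) l (wt k N i) := by
  simp only [Pi.evalAddMonoidHom_apply, wt, Pi.single_apply]
  split_ifs <;> norm_num

theorem dlIdeal_spanHomogeneousIn_le (l : Fin k) (I : Ideal (PolyRing k N 𝕜)) (c : ℤ) :
    dlIdeal k N 𝕜 l (I.spanHomogeneousIn (polyGrading k N 𝕜) {e | e l ≤ c})
      ≤ zE c := by
  refine sSup_le ?_
  rintro _ ⟨ν, ⟨f, hfJ, hfν, hf𝔪⟩, rfl⟩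
  refine zE_le_zE (not_lt.mp fun hν => hf𝔪 ?_)
  have := Ideal.coe_decompose_mem_mul_spanHomogeneousIn
    (fun _ he _ ha => mem_span_range_X_of_mem_weightedHomogeneousSubmodule he ha) hfJ
    (ν := ν) (by simpa using hν)
  rwa [decompose_of_mem_same _ hfν] at this

theorem spanHomogeneousIn_compl_subset_degGE (l : Fin k) (I : Ideal (PolyRing k N 𝕜)) (c : ℤ) :
    ∀ a ∈ I.spanHomogeneousIn (polyGrading k N 𝕜) {e | e l ≤ c}ᶜ,
      a ∈ degGE (polyGrading k N 𝕜) (Pi.evalAddMonoidHom (fun _ => ℤ) l)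
        (c + 1) := by
  have h0 := mem_degGE_zero (R := 𝕜) (evalAddMonoidHom_wt_nonneg (N := N) l)
  exact Ideal.spanHomogeneousIn_subset_degGE h0 fun e he => by simpa using he

variable {M : Type*} [AddCommGroup M] [Module 𝕜 M] [Module (PolyRing k N 𝕜) M]
  {ℳ : (Fin k → ℤ) → Submodule 𝕜 M}

theorem le_dlSubmodule (l : Fin k) {P : Submodule (PolyRing k N 𝕜) M} {n : Fin k → ℤ} {m : M}
    (hm : m ∈ ℳ n) (hmP : m ∈ P) (hm𝔪 : m ∉ mIdeal k N 𝕜 • P) :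
    zE (n l) ≤ dlSubmodule k N 𝕜 M ℳ l P :=
  le_sSup ⟨n, ⟨m, hm, hmP, hm𝔪⟩, rfl⟩

theorem mem_mIdeal_smul_of_dlSubmodule_lt {l : Fin k} {P : Submodule (PolyRing k N 𝕜) M}
    {β : ℤ} (hP : dlSubmodule k N 𝕜 M ℳ l P < zE β) {ν : Fin k → ℤ} {m : M} (hm : m ∈ ℳ ν)
    (hmP : m ∈ P) (hν : β ≤ ν l) : m ∈ mIdeal k N 𝕜 • P := by
  by_contra h𝔪
  exact (hP.trans_le ((zE_le_zE hν).trans (le_dlSubmodule l hm hmP h𝔪))).false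

variable [Decomposition ℳ] [SetLike.GradedSMul (polyGrading k N 𝕜) ℳ]

theorem le_of_le_sup_mIdeal_smul [Module.Finite (PolyRing k N 𝕜) M]
    {P Q : Submodule (PolyRing k N 𝕜) M} (hQ : Q.IsHomogeneous ℳ)
    (h : P ≤ Q ⊔ mIdeal k N 𝕜 • P) : P ≤ Q := by
  obtain ⟨B, hB⟩ := exists_forall_mem_degGE (ℳ := ℳ)
    (mem_degGE_zero (w := wt k N) fun i => (sumCoords_wt i).symm ▸ zero_le_one)
  exact Submodule.le_of_le_sup_smul_of_degGE
    (span_range_X_subset_degGE fun i => (sumCoords_wt i).ge) hB hQ h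

theorem zE_le_dlSubmodule_top [Module.Finite (PolyRing k N 𝕜) M] [Nontrivial M] {l : Fin k}
    {b : ℤ} (hM : ∀ m : M, m ∈ degGE ℳ (Pi.evalAddMonoidHom (fun _ => ℤ) l) b) :
    zE b ≤ dlSubmodule k N 𝕜 M ℳ l ⊤ := by
  by_contra hlt
  have htop : (⊤ : Submodule (PolyRing k N 𝕜) M) ≤ ⊥ := by
    refine le_of_le_sup_mIdeal_smul (Submodule.IsHomogeneous.bot ℳ) fun x _ => ?_
    refine Submodule.mem_sup_right (mem_of_forall_decompose_mem ℳ fun n => ?_)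
    by_contra hx
    have h0 : (decompose ℳ x n : M) ≠ 0 := fun h => hx (h ▸ zero_mem _)
    exact hlt ((zE_le_zE (hM x n h0)).trans
      (le_dlSubmodule l (SetLike.coe_mem _) Submodule.mem_top hx))
  obtain ⟨m, hm⟩ := exists_ne (0 : M)
  exact hm ((Submodule.mem_bot _).mp (htop Submodule.mem_top))

theorem pow_spanHomogeneousIn_compl_smul_le {I : Ideal (PolyRing k N 𝕜)}
    (hI : I.IsHomogeneous (polyGrading k N 𝕜)) {l : Fin k} {b : ℤ}
    (hM : ∀ m : M, m ∈ degGE ℳ (Pi.evalAddMonoidHom (fun _ => ℤ) l) b) {n : ℕ} {c : ℤ}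
    (hD : dlSubmodule k N 𝕜 M ℳ l (I ^ n • ⊤) < zE (n * (c + 1) + b)) :
    I.spanHomogeneousIn (polyGrading k N 𝕜) {e | e l ≤ c}ᶜ ^ n • (⊤ : Submodule (PolyRing k N 𝕜) M) ≤
      mIdeal k N 𝕜 • I ^ n • ⊤ := by
  intro x hx
  have hdeg := pow_smul_top_subset_degGE (spanHomogeneousIn_compl_subset_degGE l I c) hM n x hx
  have hxP : x ∈ I ^ n • (⊤ : Submodule (PolyRing k N 𝕜) M) :=
    Submodule.smul_mono_left (Ideal.pow_right_mono Ideal.spanHomogeneousIn_le _) hx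
  refine mem_of_forall_decompose_mem ℳ fun ν => ?_
  by_cases h0 : (decompose ℳ x ν : M) = 0
  · simp [h0]
  · exact mem_mIdeal_smul_of_dlSubmodule_lt hD (SetLike.coe_mem _)
      ((hI.pow n).smul (Submodule.IsHomogeneous.top ℳ) ν hxP) (hdeg ν h0)

theorem isMReduction_spanHomogeneousIn [Module.Finite (PolyRing k N 𝕜) M]
    {I : Ideal (PolyRing k N 𝕜)} (hI : I.IsHomogeneous (polyGrading k N 𝕜)) {l : Fin k} {b : ℤ}
    (hM : ∀ m : M, m ∈ degGE ℳ (Pi.evalAddMonoidHom (fun _ => ℤ) l) b) {n : ℕ} {c : ℤ}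
    (hD : dlSubmodule k N 𝕜 M ℳ l (I ^ (n + 1) • ⊤) < zE ((n + 1 : ℕ) * (c + 1) + b)) :
    IsMReduction k N 𝕜 M I (I.spanHomogeneousIn (polyGrading k N 𝕜) {e | e l ≤ c}) := by
  set J := I.spanHomogeneousIn (polyGrading k N 𝕜) {e | e l ≤ c}
  set J' := I.spanHomogeneousIn (polyGrading k N 𝕜) {e | e l ≤ c}ᶜ
  have hle : I ^ (n + 1) • (⊤ : Submodule (PolyRing k N 𝕜) M) ≤
      J • I ^ n • ⊤ ⊔ mIdeal k N 𝕜 • I ^ (n + 1) • ⊤ :=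
    calc I ^ (n + 1) • (⊤ : Submodule (PolyRing k N 𝕜) M) = (J ⊔ J') ^ (n + 1) • ⊤ := by
          rw [Ideal.spanHomogeneousIn_sup_compl hI]
      _ ≤ (J * (J ⊔ J') ^ n ⊔ J' ^ (n + 1)) • ⊤ :=
          Submodule.smul_mono_left (Ideal.sup_pow_succ_le _ _ _)
      _ = J • I ^ n • ⊤ ⊔ J' ^ (n + 1) • ⊤ := by
          rw [Submodule.sup_smul, Submodule.mul_smul, Ideal.spanHomogeneousIn_sup_compl hI]
      _ ≤ _ := sup_le_sup_left (pow_spanHomogeneousIn_compl_smul_le hI hM hD) _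
  have heq : I ^ (n + 1) • (⊤ : Submodule (PolyRing k N 𝕜) M) = J • I ^ n • ⊤ := by
    refine le_antisymm (le_of_le_sup_mIdeal_smul (Ideal.isHomogeneous_spanHomogeneousIn.smul
      ((hI.pow n).smul (Submodule.IsHomogeneous.top ℳ))) hle) ?_
    rw [pow_succ', Submodule.mul_smul]
    exact Submodule.smul_mono_left Ideal.spanHomogeneousIn_le
  exact ⟨Ideal.spanHomogeneousIn_le, isHomog_iff_isHomogeneous.mpr
    Ideal.isHomogeneous_spanHomogeneousIn, n, fun m hm => Ideal.pow_succ_smul_eq_of_le heq hm⟩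

end Multigraded

theorem dl_pow_smul_ge_general
    (k : ℕ) (N : Fin k → ℕ) (𝕜 : Type*) [Field 𝕜]
    (M : Type*) [AddCommGroup M] [Module 𝕜 M]
    [Module (MvPolynomial (Σ l : Fin k, Fin (N l)) 𝕜) M]
    [Module.Finite (MvPolynomial (Σ l : Fin k, Fin (N l)) 𝕜) M]
    (ℳ : (Fin k → ℤ) → Submodule 𝕜 M)
    [DirectSum.Decomposition ℳ]
    (hsmul : ∀ (e n : Fin k → ℤ),
      ∀ s ∈ weightedHomogeneousSubmodule 𝕜 (wt k N) e,
      ∀ m ∈ ℳ n, s • m ∈ ℳ (e + n))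
    (I : Ideal (MvPolynomial (Σ l : Fin k, Fin (N l)) 𝕜)) (hI : IsHomog k N 𝕜 I)
    (l : Fin k)
    (ρ : EReal)
    (hρ : IsLeast {x : EReal |
      ∃ J, IsMReduction k N 𝕜 M I J ∧ x = dlIdeal k N 𝕜 l J} ρ)
    (b : ℤ)
    (hb : IsLeast {d : ℤ | ∃ n : Fin k → ℤ, n l = d ∧ ℳ n ≠ ⊥} b) :
    ∀ n : ℕ,
      zE (n : ℤ) * ρ + zE b ≤
        dlSubmodule k N 𝕜 M ℳ l
          (I ^ n • ⊤ : Submodule (MvPolynomial (Σ l : Fin k, Fin (N l)) 𝕜) M) := by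
  have : SetLike.GradedSMul (polyGrading k N 𝕜) ℳ :=
    ⟨fun _ _ _ _ ha hm => hsmul _ _ _ ha _ hm⟩
  have hM : ∀ m : M, m ∈ degGE ℳ (Pi.evalAddMonoidHom (fun _ => ℤ) l) b := fun m ν hν =>
    hb.2 ⟨ν, rfl, (Submodule.ne_bot_iff _).mpr ⟨_, SetLike.coe_mem _, hν⟩⟩
  rintro (_ | n)
  · obtain ⟨ν, -, hν⟩ := hb.1
    obtain ⟨m, -, hm⟩ := (Submodule.ne_bot_iff _).mp hν
    have : Nontrivial M := nontrivial_of_ne m 0 hm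
    simpa [zE] using zE_le_dlSubmodule_top hM
  · refine zE_mul_add_le_of_forall n.succ_pos fun c hc => not_lt.mp fun hD => ?_
    have hred := isMReduction_spanHomogeneousIn (isHomog_iff_isHomogeneous.mp hI) hM hD
    exact (hc.trans_le ((hρ.2 ⟨_, hred, rfl⟩).trans (dlIdeal_spanHomogeneousIn_le l I c))).false

/-- `d^{(l)}(I^n M) ≥ n·ρ^{(l)}_M(I) + beg^{(l)}(M)` for all `n ≥ 0`,
where `ρ^{(l)}_M(I)` is the infimum of `d^{(l)}(J)` over all `M`-reductions `J ⊆ I`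
and `beg^{(l)}(M) = min { n_l | M_n ≠ 0 }`. -/
theorem dl_pow_smul_ge
    (k : ℕ) (N : Fin k → ℕ) (𝕜 : Type*) [Field 𝕜]
    (M : Type*) [AddCommGroup M] [Module 𝕜 M]
    [Module (MvPolynomial (Σ l : Fin k, Fin (N l)) 𝕜) M]
    [IsScalarTower 𝕜 (MvPolynomial (Σ l : Fin k, Fin (N l)) 𝕜) M]
    [Module.Finite (MvPolynomial (Σ l : Fin k, Fin (N l)) 𝕜) M]
    (ℳ : (Fin k → ℤ) → Submodule 𝕜 M)
    [DirectSum.Decomposition ℳ]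
    (hsmul : ∀ (e n : Fin k → ℤ),
      ∀ s ∈ weightedHomogeneousSubmodule 𝕜 (wt k N) e,
      ∀ m ∈ ℳ n, s • m ∈ ℳ (e + n))
    (I : Ideal (MvPolynomial (Σ l : Fin k, Fin (N l)) 𝕜)) (hI : IsHomog k N 𝕜 I)
    (l : Fin k)
    (ρ : EReal)
    (hρ : IsLeast {x : EReal |
      ∃ J, IsMReduction k N 𝕜 M I J ∧ x = dlIdeal k N 𝕜 l J} ρ)
    (b : ℤ)
    (hb : IsLeast {d : ℤ | ∃ n : Fin k → ℤ, n l = d ∧ ℳ n ≠ ⊥} b) :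
    ∀ n : ℕ,
      zE (n : ℤ) * ρ + zE b ≤
        dlSubmodule k N 𝕜 M ℳ l
          (I ^ n • ⊤ : Submodule (MvPolynomial (Σ l : Fin k, Fin (N l)) 𝕜) M) :=
  dl_pow_smul_ge_general k N 𝕜 M ℳ hsmul I hI l ρ hρ b hb
end

section
/- Let R = k[Y_1,...,Y_w] be a polynomial ring over a field k where each variable Y_s is given degree (d_s, 1) in Z^{k+1} with d_s in Z^k nonnegative, and let M be a finitely generated Z^{k+1}-graded R-module. For n in Z set M_n = ⊕_{m in Z^k} M_{(m,n)} and a_l(M_n) = max{m_l : M_{(m,n)} ≠ 0} (with −∞ if M_n = 0). Then for each 1 ≤ l ≤ k, the function n ↦ a_l(M_n) is eventually linear in n with slope at most d^{(l)} = max_s (d_s)_l; in the base case w = 0 (R = k), M_n = 0 for all n ≫ 0. -/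
/-!
The support `{d | ℳ d ≠ ⊥}` is a finite union of cones `t + Σ_{s ∈ V} ℕ (d_s, 1)`. This is proved
by Noetherian induction on homogeneous submodules `N`: pick a homogeneous `x ∉ N` of degree `t`
whose colon ideal `N : x` is maximal among those of homogeneous elements outside `N`. Maximality
forces `X^α • x ∉ N` as soon as every variable occurring in `α` lies in
`V = {s | X s • x ∉ N}`, so the degrees `d` with `ℳ d ⊄ N` are the cone at `(t, V)` together with
those for which `ℳ d ⊄ N + R x`.

In degree `n ≥ t.2` the largest `l`-th coordinate on the cone at `(t, V)` is
`t.1 l + (n - t.2) · max_{s ∈ V} (d_s)_l`, and the maximum of finitely many eventually linear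
functions is eventually linear, its slope being one of theirs. A cone with `V = ∅` is a single
point, which is all that occurs when `w = 0`.
-/

open MvPolynomial Filter

namespace MultigradedSupport

def degreeCone {σ ι : Type*} [AddCommMonoid ι] (wts : σ → ι) (t : ι) (V : Finset σ) : Set ι :=
  {d | ∃ α : σ →₀ ℕ, α.support ⊆ V ∧ t + Finsupp.weight wts α = d}

theorem degreeCone_empty {σ ι : Type*} [AddCommMonoid ι] (wts : σ → ι) (t : ι) :
    degreeCone wts t ∅ = {t} := by
  ext d
  simp [degreeCone, eq_comm]

section Decomposition

variable {ι M S : Type*} [DecidableEq ι] [AddCommMonoid M] [SetLike S M] [AddSubmonoidClass S M]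
  (ℳ : ι → S) [DirectSum.Decomposition ℳ]

theorem decompose_sum_of_mem {ι' : Type*} (s : Finset ι') (f : ι' → ι) (z : ι' → M)
    (hz : ∀ j ∈ s, z j ∈ ℳ (f j)) (d : ι) :
    (DirectSum.decompose ℳ (∑ j ∈ s, z j) d : M) = ∑ j ∈ s with f j = d, z j := by
  rw [Finset.sum_filter, DirectSum.decompose_sum, DFinsupp.finsetSum_apply,
    AddSubmonoidClass.coe_finsetSum]
  refine Finset.sum_congr rfl fun j hj => ?_
  split_ifs with h
  · exact DirectSum.decompose_of_mem_same ℳ (h ▸ hz j hj)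
  · exact DirectSum.decompose_of_mem_ne ℳ (hz j hj) h

end Decomposition

section Colon

variable {R σ M : Type*} [CommRing R] [AddCommGroup M] [Module (MvPolynomial σ R) M]
  {N : Submodule (MvPolynomial σ R) M} {x : M}

theorem monomial_smul_mem_of_le {α β : σ →₀ ℕ} (hle : β ≤ α)
    (h : (monomial β (1 : R) : MvPolynomial σ R) • x ∈ N) :
    (monomial α (1 : R) : MvPolynomial σ R) • x ∈ N := by
  rw [← tsub_add_cancel_of_le hle, ← mul_one (1 : R), ← monomial_mul, mul_smul]
  exact N.smul_mem _ h

/-- Maximality of `N : x` makes `{α | X^α • x ∉ N}` an additive submonoid of `σ →₀ ℕ`. -/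
theorem monomial_smul_notMem_of_colon_maximal (hxN : x ∉ N)
    (hmax : ∀ α : σ →₀ ℕ, (monomial α (1 : R) : MvPolynomial σ R) • x ∉ N →
      N.colon {(monomial α (1 : R) : MvPolynomial σ R) • x} ≤ N.colon {x})
    {α : σ →₀ ℕ} (hα : ∀ s ∈ α.support, (X s : MvPolynomial σ R) • x ∉ N) :
    (monomial α (1 : R) : MvPolynomial σ R) • x ∉ N := by
  let T : AddSubmonoid (σ →₀ ℕ) :=
    { carrier := {α | (monomial α (1 : R) : MvPolynomial σ R) • x ∉ N}
      zero_mem' := by simpa using hxN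
      add_mem' := fun {α β} hα hβ hαβ => by
        rw [add_comm, ← mul_one (1 : R), ← monomial_mul, mul_smul] at hαβ
        exact hβ (Submodule.mem_colon_singleton.mp
          (hmax α hα (Submodule.mem_colon_singleton.mpr hαβ))) }
  change α ∈ T
  rw [← Finsupp.sum_single α]
  refine sum_mem fun s hs => ?_
  rw [← Finsupp.smul_single_one]
  exact T.nsmul_mem (hα s hs) _

end Colon

section Graded

variable {R σ ι M : Type*} [CommRing R] [AddCommMonoid ι] [AddCommGroup M]
  [Module R M] [Module (MvPolynomial σ R) M] {wts : σ → ι} {ℳ : ι → Submodule R M}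
  [SetLike.GradedSMul (weightedHomogeneousSubmodule R wts) ℳ]
  {N : Submodule (MvPolynomial σ R) M} {x : M} {t : ι}

theorem monomial_smul_mem (α : σ →₀ ℕ) (c : R) (hx : x ∈ ℳ t) :
    (monomial α c : MvPolynomial σ R) • x ∈ ℳ (Finsupp.weight wts α + t) :=
  SetLike.GradedSMul.smul_mem (A := weightedHomogeneousSubmodule R wts)
    (isWeightedHomogeneous_monomial wts α c rfl) hx

variable [DecidableEq ι] [DirectSum.Decomposition ℳ]

theorem decompose_smul_of_mem (p : MvPolynomial σ R) (hx : x ∈ ℳ t) (d : ι) :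
    (DirectSum.decompose ℳ (p • x) d : M) =
      ∑ α ∈ p.support with Finsupp.weight wts α + t = d,
        (monomial α (p.coeff α) : MvPolynomial σ R) • x := by
  conv_lhs => rw [p.as_sum, Finset.sum_smul]
  exact decompose_sum_of_mem ℳ _ _ _ (fun α _ => monomial_smul_mem α _ hx) d

theorem isHomogeneous_sup_span_singleton (wts : σ → ι)
    [SetLike.GradedSMul (weightedHomogeneousSubmodule R wts) ℳ] (hN : N.IsHomogeneous ℳ)
    (hx : x ∈ ℳ t) :
    (N ⊔ Submodule.span _ {x}).IsHomogeneous ℳ := by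
  intro d y hy
  obtain ⟨a, ha, b, hb, rfl⟩ := Submodule.mem_sup.mp hy
  obtain ⟨p, rfl⟩ := Submodule.mem_span_singleton.mp hb
  rw [DirectSum.decompose_add, DirectSum.add_apply, Submodule.coe_add,
    decompose_smul_of_mem (wts := wts) p hx]
  exact add_mem (Submodule.mem_sup_left (hN d ha)) (Submodule.mem_sup_right
    (sum_mem fun α _ => Submodule.smul_mem _ _ (Submodule.mem_span_singleton_self x)))

theorem exists_monomial_smul_notMem (hN : N.IsHomogeneous ℳ) (hx : x ∈ ℳ t) {y : M} {d : ι}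
    (hy : y ∈ ℳ d) (hyN' : y ∈ N ⊔ Submodule.span _ {x}) (hyN : y ∉ N) :
    ∃ α : σ →₀ ℕ, Finsupp.weight wts α + t = d ∧
      (monomial α (1 : R) : MvPolynomial σ R) • x ∉ N := by
  obtain ⟨a, ha, b, hb, rfl⟩ := Submodule.mem_sup.mp hyN'
  obtain ⟨p, rfl⟩ := Submodule.mem_span_singleton.mp hb
  rw [← DirectSum.decompose_of_mem_same ℳ hy, DirectSum.decompose_add, DirectSum.add_apply,
    Submodule.coe_add, decompose_smul_of_mem (wts := wts) p hx] at hyN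
  by_contra! h
  refine hyN (add_mem (hN d ha) (sum_mem fun α hα => ?_))
  rw [← mul_one (p.coeff α), ← C_mul_monomial, mul_smul]
  exact N.smul_mem _ (h α (Finset.mem_filter.mp hα).2)

theorem setOf_exists_notMem_eq_union (hN : N.IsHomogeneous ℳ) (hx : x ∈ ℳ t) (hxN : x ∉ N)
    (hmax : ∀ d z, z ∈ ℳ d → z ∉ N → ¬ N.colon {x} < N.colon {z}) {V : Finset σ}
    (hV : ∀ s, s ∈ V ↔ (X s : MvPolynomial σ R) • x ∉ N) :
    {d | ∃ y ∈ ℳ d, y ∉ N} =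
      degreeCone wts t V ∪ {d | ∃ y ∈ ℳ d, y ∉ N ⊔ Submodule.span _ {x}} := by
  have hcolon (α : σ →₀ ℕ) (hα : (monomial α (1 : R) : MvPolynomial σ R) • x ∉ N) :
      N.colon {(monomial α (1 : R) : MvPolynomial σ R) • x} ≤ N.colon {x} := by
    refine (eq_of_le_of_not_lt (fun r hr => ?_)
      (hmax _ _ (monomial_smul_mem (wts := wts) α 1 hx) hα)).ge
    rw [Submodule.mem_colon_singleton] at hr ⊢
    rw [smul_comm]
    exact N.smul_mem _ hr
  ext d
  constructor
  · rintro ⟨y, hy, hyN⟩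
    by_cases hyN' : y ∈ N ⊔ Submodule.span _ {x}
    · obtain ⟨α, rfl, hα⟩ := exists_monomial_smul_notMem (wts := wts) hN hx hy hyN' hyN
      refine .inl ⟨α, fun s hs => (hV s).mpr fun hXs => hα ?_, add_comm _ _⟩
      exact monomial_smul_mem_of_le (Finsupp.single_le_iff.mpr
        (Nat.one_le_iff_ne_zero.mpr (Finsupp.mem_support_iff.mp hs))) hXs
    · exact .inr ⟨y, hy, hyN'⟩
  · rintro (⟨α, hαV, rfl⟩ | ⟨y, hy, hyN'⟩)
    · exact ⟨_, add_comm t _ ▸ monomial_smul_mem α 1 hx,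
        monomial_smul_notMem_of_colon_maximal hxN hcolon fun s hs => (hV s).mp (hαV hs)⟩
    · exact ⟨y, hy, fun hyN => hyN' (Submodule.mem_sup_left hyN)⟩

variable [Finite σ] [IsNoetherianRing R] [Module.Finite (MvPolynomial σ R) M]

theorem exists_finset_setOf_exists_notMem_eq_biUnion (N : Submodule (MvPolynomial σ R) M)
    (hN : N.IsHomogeneous ℳ) :
    ∃ P : Finset (ι × Finset σ), {d | ∃ y ∈ ℳ d, y ∉ N} = ⋃ p ∈ P, degreeCone wts p.1 p.2 := by
  classical
  have : IsNoetherian (MvPolynomial σ R) M := isNoetherian_of_isNoetherianRing_of_finite _ _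
  induction N using IsNoetherian.induction with
  | hgt N IH =>
    by_cases hall : ∀ d, ∀ y ∈ ℳ d, y ∈ N
    · exact ⟨∅, by simpa [Set.eq_empty_iff_forall_notMem] using hall⟩
    push Not at hall
    obtain ⟨d₁, x₁, hx₁, hx₁N⟩ := hall
    obtain ⟨_, ⟨t, x, hx, hxN, rfl⟩, hmax⟩ := set_has_maximal_iff_noetherian.mpr inferInstance
      {I : Ideal (MvPolynomial σ R) | ∃ t x, x ∈ ℳ t ∧ x ∉ N ∧ N.colon {x} = I}
      ⟨_, d₁, x₁, hx₁, hx₁N, rfl⟩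
    obtain ⟨P, hP⟩ := IH _ (left_lt_sup.mpr (by rwa [Submodule.span_singleton_le_iff_mem]))
      (isHomogeneous_sup_span_singleton wts hN hx)
    refine ⟨insert (t, (Set.toFinite {s | (X s : MvPolynomial σ R) • x ∉ N}).toFinset) P, ?_⟩
    rw [Finset.set_biUnion_insert, ← hP]
    exact setOf_exists_notMem_eq_union hN hx hxN (fun d z hz hzN => hmax _ ⟨d, z, hz, hzN, rfl⟩)
      fun s => Set.Finite.mem_toFinset _

theorem exists_finset_support_eq_biUnion_degreeCone :
    ∃ P : Finset (ι × Finset σ), {d | ℳ d ≠ ⊥} = ⋃ p ∈ P, degreeCone wts p.1 p.2 := by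
  obtain ⟨P, hP⟩ := exists_finset_setOf_exists_notMem_eq_biUnion (wts := wts) (ℳ := ℳ) ⊥
    fun d y hy => by simp [(Submodule.mem_bot _).mp hy]
  exact ⟨P, by simpa [Submodule.ne_bot_iff] using hP⟩

end Graded

def IsEventuallyLinearMax (S : ℤ → Set ℤ) (c : ℤ) : Prop :=
  (∃ a ≤ c, ∃ b, ∀ᶠ n in atTop, IsGreatest (S n) (a * n + b)) ∨ ∀ᶠ n in atTop, S n = ∅

theorem eventually_linear_le_of_lt {a a' : ℤ} (h : a < a') (b b' : ℤ) :
    ∀ᶠ n in atTop, a * n + b ≤ a' * n + b' := by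
  filter_upwards [eventually_ge_atTop 0, eventually_ge_atTop (b - b')] with n hn₀ hn
  nlinarith

theorem exists_eventually_max_linear_eq (a b a' b' : ℤ) :
    ∃ a'' b'', (a'' = a ∨ a'' = a') ∧
      ∀ᶠ n in atTop, max (a * n + b) (a' * n + b') = a'' * n + b'' := by
  rcases lt_trichotomy a a' with h | rfl | h
  · exact ⟨a', b', .inr rfl, (eventually_linear_le_of_lt h b b').mono fun _ => max_eq_right⟩
  · exact ⟨a, max b b', .inl rfl, .of_forall fun _ => max_add_add_left _ _ _⟩
  · exact ⟨a, b, .inl rfl, (eventually_linear_le_of_lt h b' b).mono fun _ => max_eq_left⟩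

theorem IsEventuallyLinearMax.union {S T : ℤ → Set ℤ} {c : ℤ} (hS : IsEventuallyLinearMax S c)
    (hT : IsEventuallyLinearMax T c) : IsEventuallyLinearMax (fun n => S n ∪ T n) c := by
  rcases hS with ⟨a, hac, b, hS⟩ | hS
  · rcases hT with ⟨a', hac', b', hT⟩ | hT
    · obtain ⟨a'', b'', ha'', hmax⟩ := exists_eventually_max_linear_eq a b a' b'
      refine .inl ⟨a'', by rcases ha'' with rfl | rfl <;> assumption, b'', ?_⟩
      filter_upwards [hS, hT, hmax] with n hSn hTn hn
      exact hn ▸ hSn.union hTn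
    · refine .inl ⟨a, hac, b, ?_⟩
      filter_upwards [hS, hT] with n hSn hTn
      simpa [hTn] using hSn
  · rcases hT with ⟨a', hac', b', hT⟩ | hT
    · refine .inl ⟨a', hac', b', ?_⟩
      filter_upwards [hS, hT] with n hSn hTn
      simpa [hSn] using hTn
    · right
      filter_upwards [hS, hT] with n hSn hTn
      simp [hSn, hTn]

theorem IsEventuallyLinearMax.biUnion {α : Type*} {S : α → ℤ → Set ℤ} {c : ℤ} (P : Finset α)
    (hS : ∀ p ∈ P, IsEventuallyLinearMax (S p) c) :
    IsEventuallyLinearMax (fun n => ⋃ p ∈ P, S p n) c := by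
  classical
  induction P using Finset.induction_on with
  | empty => exact .inr (.of_forall fun _ => by simp)
  | insert p P _ ih =>
    simp only [Finset.set_biUnion_insert]
    exact (hS p (P.mem_insert_self p)).union
      (ih fun q hq => hS q (Finset.mem_insert_of_mem hq))

section Levels

variable {σ κ : Type*}

def levelCoords (A : Set ((κ → ℤ) × ℤ)) (l : κ) (n : ℤ) : Set ℤ :=
  {m | ∃ v, v l = m ∧ (v, n) ∈ A}

theorem levelCoords_biUnion {α : Type*} (P : Finset α) (A : α → Set ((κ → ℤ) × ℤ)) (l : κ)
    (n : ℤ) : levelCoords (⋃ p ∈ P, A p) l n = ⋃ p ∈ P, levelCoords (A p) l n := by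
  ext m
  simp only [levelCoords, Set.mem_iUnion, Set.mem_ofPred_eq, exists_prop]
  constructor
  · rintro ⟨v, rfl, p, hp, hv⟩
    exact ⟨p, hp, v, rfl, hv⟩
  · rintro ⟨p, hp, v, rfl, hv⟩
    exact ⟨v, rfl, p, hp, hv⟩

theorem levelCoords_eq_empty_iff (A : Set ((κ → ℤ) × ℤ)) (l : κ) (n : ℤ) :
    levelCoords A l n = ∅ ↔ ∀ v, (v, n) ∉ A := by
  rw [Set.eq_empty_iff_forall_notMem]
  exact ⟨fun h v hv => h _ ⟨v, rfl, hv⟩, fun h _ ⟨v, _, hv⟩ => h v hv⟩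

theorem weight_fst_apply (u : σ → κ → ℤ) (α : σ →₀ ℕ) (l : κ) :
    (Finsupp.weight (fun s => (u s, (1 : ℤ))) α).1 l = ∑ s ∈ α.support, (α s : ℤ) * u s l := by
  simp [Finsupp.weight_apply, Finsupp.sum, Prod.fst_sum, Finset.sum_apply]

theorem weight_snd (u : σ → κ → ℤ) (α : σ →₀ ℕ) :
    (Finsupp.weight (fun s => (u s, (1 : ℤ))) α).2 = ∑ s ∈ α.support, (α s : ℤ) := by
  simp [Finsupp.weight_apply, Finsupp.sum, Prod.snd_sum]

theorem isGreatest_levelCoords_degreeCone (u : σ → κ → ℤ) (l : κ) (t : (κ → ℤ) × ℤ)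
    {V : Finset σ} (hV : V.Nonempty) {n : ℤ} (hn : t.2 ≤ n) :
    IsGreatest (levelCoords (degreeCone (fun s => (u s, 1)) t V) l n)
      (V.sup' hV (u · l) * n + (t.1 l - V.sup' hV (u · l) * t.2)) := by
  set D := V.sup' hV (u · l)
  constructor
  · obtain ⟨s, hs, hD⟩ := V.exists_mem_eq_sup' hV (u · l)
    have hcast : ((n - t.2).toNat : ℤ) = n - t.2 := Int.toNat_of_nonneg (by omega)
    refine ⟨(t + Finsupp.weight (fun s => (u s, 1)) (.single s (n - t.2).toNat)).1, ?_,
      .single s (n - t.2).toNat, ?_, Prod.ext rfl ?_⟩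
    · simp [Finsupp.weight_single, hcast, D, hD]
      ring
    · exact Finsupp.support_single_subset.trans (by simpa using hs)
    · simp [Finsupp.weight_single, hcast]
  · rintro m ⟨v, rfl, α, hαV, hα⟩
    have hfst : v l = t.1 l + ∑ s ∈ α.support, (α s : ℤ) * u s l := by
      rw [← weight_fst_apply, ← Pi.add_apply, ← Prod.fst_add, hα]
    have hsnd : n = t.2 + ∑ s ∈ α.support, (α s : ℤ) := by
      rw [← weight_snd u, ← Prod.snd_add, hα]
    have hbound : ∑ s ∈ α.support, (α s : ℤ) * u s l ≤ (∑ s ∈ α.support, (α s : ℤ)) * D := by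
      rw [Finset.sum_mul]
      exact Finset.sum_le_sum fun s hs =>
        mul_le_mul_of_nonneg_left (V.le_sup' (u · l) (hαV hs)) (Int.natCast_nonneg _)
    rw [hfst, hsnd]
    linarith

theorem eventually_levelCoords_degreeCone_empty_eq_empty (u : σ → κ → ℤ) (l : κ)
    (t : (κ → ℤ) × ℤ) :
    ∀ᶠ n in atTop, levelCoords (degreeCone (fun s => (u s, 1)) t ∅) l n = ∅ := by
  filter_upwards [eventually_gt_atTop t.2] with n hn
  ext m
  simp only [degreeCone_empty, levelCoords, Set.mem_singleton_iff, Set.mem_ofPred_eq,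
    Set.mem_empty_iff_false, iff_false, not_exists, not_and]
  rintro v - rfl
  exact hn.ne rfl

theorem isEventuallyLinearMax_levelCoords_degreeCone (u : σ → κ → ℤ) (l : κ) {c : ℤ}
    (hc : ∀ s, u s l ≤ c) (t : (κ → ℤ) × ℤ) (V : Finset σ) :
    IsEventuallyLinearMax (levelCoords (degreeCone (fun s => (u s, 1)) t V) l) c := by
  rcases V.eq_empty_or_nonempty with rfl | hV
  · exact .inr (eventually_levelCoords_degreeCone_empty_eq_empty u l t)
  · exact .inl ⟨_, V.sup'_le hV _ fun s _ => hc s, _,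
      (eventually_ge_atTop t.2).mono fun n hn => isGreatest_levelCoords_degreeCone u l t hV hn⟩

theorem isEventuallyLinearMax_levelCoords_biUnion_degreeCone (u : σ → κ → ℤ) (l : κ) {c : ℤ}
    (hc : ∀ s, u s l ≤ c) (P : Finset (((κ → ℤ) × ℤ) × Finset σ)) :
    IsEventuallyLinearMax
      (levelCoords (⋃ p ∈ P, degreeCone (fun s => (u s, 1)) p.1 p.2) l) c := by
  rw [funext (levelCoords_biUnion P _ l)]
  exact IsEventuallyLinearMax.biUnion P fun p _ =>
    isEventuallyLinearMax_levelCoords_degreeCone u l hc p.1 p.2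

theorem eventually_levelCoords_biUnion_degreeCone_eq_empty [IsEmpty σ] (u : σ → κ → ℤ) (l : κ)
    (P : Finset (((κ → ℤ) × ℤ) × Finset σ)) :
    ∀ᶠ n in atTop, levelCoords (⋃ p ∈ P, degreeCone (fun s => (u s, 1)) p.1 p.2) l n = ∅ := by
  have hpieces : ∀ᶠ n in atTop, ∀ p ∈ P,
      levelCoords (degreeCone (fun s => (u s, 1)) p.1 p.2) l n = ∅ :=
    (eventually_all_finset P).mpr fun p _ => by
      rw [Subsingleton.elim p.2 ∅]
      exact eventually_levelCoords_degreeCone_empty_eq_empty u l p.1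
  filter_upwards [hpieces] with n hn
  simpa [levelCoords_biUnion] using hn

end Levels

end MultigradedSupport

theorem aInv_eventually_linear_general
    (k w : ℕ) (𝕜 : Type*) [Field 𝕜]
    (dvec : Fin w → (Fin k → ℤ))
    (M : Type*) [AddCommGroup M] [Module 𝕜 M]
    [Module (MvPolynomial (Fin w) 𝕜) M]
    [Module.Finite (MvPolynomial (Fin w) 𝕜) M]
    (ℳ : ((Fin k → ℤ) × ℤ) → Submodule 𝕜 M)
    [DirectSum.Decomposition ℳ]
    (hsmul : ∀ (e : (Fin k → ℤ) × ℤ) (n : (Fin k → ℤ) × ℤ),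
      ∀ s ∈ weightedHomogeneousSubmodule 𝕜 (fun s : Fin w => ((dvec s, 1) :
        (Fin k → ℤ) × ℤ)) e,
      ∀ m ∈ ℳ n, s • m ∈ ℳ (e + n))
    (l : Fin k) (dl : ℤ) (hdl : ∀ s, dvec s l ≤ dl) :
    ((∃ a b : ℤ, a ≤ dl ∧ ∃ n₀ : ℤ, ∀ n ≥ n₀,
          IsGreatest {m : ℤ | ∃ v : Fin k → ℤ, v l = m ∧ ℳ (v, n) ≠ ⊥}
            (a * n + b)) ∨
        (∃ n₀ : ℤ, ∀ n ≥ n₀, ∀ v : Fin k → ℤ, ℳ (v, n) = ⊥)) ∧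
      (w = 0 → ∃ n₀ : ℤ, ∀ n ≥ n₀, ∀ v : Fin k → ℤ, ℳ (v, n) = ⊥) := by
  open MultigradedSupport in
  have : SetLike.GradedSMul
      (weightedHomogeneousSubmodule 𝕜 fun s => ((dvec s, 1) : (Fin k → ℤ) × ℤ)) ℳ :=
    ⟨fun _ _ _ _ hp hm => hsmul _ _ _ hp _ hm⟩
  obtain ⟨P, hP⟩ := exists_finset_support_eq_biUnion_degreeCone
    (wts := fun s => ((dvec s, 1) : (Fin k → ℤ) × ℤ)) (ℳ := ℳ)
  have hempty_iff (n : ℤ) : levelCoords {d | ℳ d ≠ ⊥} l n = ∅ ↔ ∀ v, ℳ (v, n) = ⊥ := by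
    simp [levelCoords_eq_empty_iff]
  refine ⟨?_, fun hw => ?_⟩
  · rcases hP ▸ isEventuallyLinearMax_levelCoords_biUnion_degreeCone dvec l hdl P with
      ⟨a, ha, b, hlin⟩ | hempty
    · obtain ⟨n₀, hn₀⟩ := eventually_atTop.mp hlin
      exact .inl ⟨a, b, ha, n₀, hn₀⟩
    · obtain ⟨n₀, hn₀⟩ := eventually_atTop.mp hempty
      exact .inr ⟨n₀, fun n hn => (hempty_iff n).mp (hn₀ n hn)⟩
  · subst hw
    obtain ⟨n₀, hn₀⟩ :=
      eventually_atTop.mp (hP ▸ eventually_levelCoords_biUnion_degreeCone_eq_empty dvec l P)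
    exact ⟨n₀, fun n hn => (hempty_iff n).mp (hn₀ n hn)⟩

/-- Let `R = 𝕜[Y₁,…,Y_w]` with `deg Y_s = (d_s, 1) ∈ ℤ^{k+1}`, the
`d_s ∈ ℤ^k` having nonnegative entries, and let `ℳ` be a finitely generated
`ℤ^{k+1}`-graded `R`-module.  Setting `a_l(ℳ_n) = max { m l | ℳ_{(m,n)} ≠ 0 }`, the
function `n ↦ a_l(ℳ_n)` is eventually linear in `n` with slope at most
`d^{(l)} = max_s (d_s)_l` (or `ℳ_n = 0` for all `n ≫ 0`); in the base case `w = 0`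
(`R = 𝕜`), `ℳ_n = 0` for all `n ≫ 0`. -/
theorem aInv_eventually_linear
    (k w : ℕ) (𝕜 : Type*) [Field 𝕜]
    (dvec : Fin w → (Fin k → ℤ)) (hpos : ∀ s l', 0 ≤ dvec s l')
    (M : Type*) [AddCommGroup M] [Module 𝕜 M]
    [Module (MvPolynomial (Fin w) 𝕜) M]
    [IsScalarTower 𝕜 (MvPolynomial (Fin w) 𝕜) M]
    [Module.Finite (MvPolynomial (Fin w) 𝕜) M]
    (ℳ : ((Fin k → ℤ) × ℤ) → Submodule 𝕜 M)
    [DirectSum.Decomposition ℳ]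
    (hsmul : ∀ (e : (Fin k → ℤ) × ℤ) (n : (Fin k → ℤ) × ℤ),
      ∀ s ∈ weightedHomogeneousSubmodule 𝕜 (fun s : Fin w => ((dvec s, 1) :
        (Fin k → ℤ) × ℤ)) e,
      ∀ m ∈ ℳ n, s • m ∈ ℳ (e + n))
    (l : Fin k) (dl : ℤ) (hdl : ∀ s, dvec s l ≤ dl) :
    ((∃ a b : ℤ, a ≤ dl ∧ ∃ n₀ : ℤ, ∀ n ≥ n₀,
          IsGreatest {m : ℤ | ∃ v : Fin k → ℤ, v l = m ∧ ℳ (v, n) ≠ ⊥}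
            (a * n + b)) ∨
        (∃ n₀ : ℤ, ∀ n ≥ n₀, ∀ v : Fin k → ℤ, ℳ (v, n) = ⊥)) ∧
      (w = 0 → ∃ n₀ : ℤ, ∀ n ≥ n₀, ∀ v : Fin k → ℤ, ℳ (v, n) = ⊥) :=
  aInv_eventually_linear_general k w 𝕜 dvec M ℳ hsmul l dl hdl
end
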